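/- arXiv:2511.07444 — 7 statements merged into one kernel-verified Lean document; each statement's English description precedes it below -/
import Mathlib

section
/- For every integer n ≥ 2 and real x > 0, the Turan-type inequality (ψ₂⁽ⁿ⁾(x+1))² ≤ ψ₂⁽ⁿ⁾(x) · ψ₂⁽ⁿ⁾(x+2) holds. -/
/-! Since `(x + k) * (x + k + 2) ≤ (x + k + 1) ^ 2`, the terms of the three series satisfy the
Turán inequality one by one, and Cauchy–Schwarz carries it over to the sums. The prefactor
`(-1) ^ (n + 1) * n!` enters both sides squared. -/

noncomputable def psi2 (n : ℕ) (x : ℝ) : ℝ :=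
  (-1) ^ (n + 1) * (n.factorial : ℝ) * ∑' k : ℕ, (1 + (k : ℝ)) / (x + k) ^ (n + 1)

theorem tsum_sq_le_tsum_mul_tsum_of_sq_le_mul {ι : Type*} {r f g : ι → ℝ}
    (hf : Summable f) (hg : Summable g) (hf₀ : ∀ i, 0 ≤ f i) (hg₀ : ∀ i, 0 ≤ g i)
    (hr : ∀ i, r i ^ 2 ≤ f i * g i) :
    (∑' i, r i) ^ 2 ≤ (∑' i, f i) * ∑' i, g i := by
  -- `2 |r i| ≤ f i + g i` by AM-GM, so `r` is summable
  have hr_summable : Summable r := by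
    refine Summable.of_norm_bounded ((hf.add hg).div_const 2) fun i => ?_
    have h₁ := two_mul_le_add_of_sq_le_mul (hf₀ i) (hg₀ i) (hr i)
    have h₂ := two_mul_le_add_of_sq_le_mul (hf₀ i) (hg₀ i) ((neg_sq (r i)).trans_le (hr i))
    rw [Real.norm_eq_abs, abs_le]
    constructor <;> linarith
  refine le_of_tendsto' (hr_summable.hasSum.pow 2) fun s => ?_
  calc (∑ i ∈ s, r i) ^ 2 ≤ (∑ i ∈ s, f i) * ∑ i ∈ s, g i :=
        Finset.sum_sq_le_sum_mul_sum_of_sq_le_mul s (fun i _ => hf₀ i) (fun i _ => hg₀ i)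
          fun i _ => hr i
    _ ≤ (∑' i, f i) * ∑' i, g i :=
        mul_le_mul (hf.sum_le_tsum s fun i _ => hf₀ i) (hg.sum_le_tsum s fun i _ => hg₀ i)
          (Finset.sum_nonneg fun i _ => hg₀ i) (tsum_nonneg hf₀)

theorem sq_div_add_one_pow_le (w : ℝ) {y : ℝ} (hy : 0 < y) (m : ℕ) :
    (w / (y + 1) ^ m) ^ 2 ≤ w / y ^ m * (w / (y + 2) ^ m) := by
  have hprod : y * (y + 2) ≤ (y + 1) ^ 2 := by nlinarith
  calc (w / (y + 1) ^ m) ^ 2 = w ^ 2 / ((y + 1) ^ 2) ^ m := by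
        rw [div_pow, ← pow_mul, ← pow_mul']
    _ ≤ w ^ 2 / (y * (y + 2)) ^ m := by gcongr
    _ = w / y ^ m * (w / (y + 2) ^ m) := by rw [mul_pow, div_mul_div_comm, sq]

theorem summable_one_add_div_add_pow {n : ℕ} (hn : 2 ≤ n) {y : ℝ} (hy : 0 < y) :
    Summable fun k : ℕ => (1 + (k : ℝ)) / (y + k) ^ (n + 1) := by
  set C := max 1 y⁻¹
  have hbound : Summable fun k : ℕ => C * (1 / |(k : ℝ) + y| ^ (n : ℝ)) :=
    ((Real.summable_one_div_nat_add_rpow y n).mpr (by exact_mod_cast hn)).mul_left C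
  refine hbound.of_nonneg_of_le (fun k => by positivity) fun k => ?_
  have hyk : 0 < y + k := by positivity
  have hnum : 1 + (k : ℝ) ≤ C * (y + k) := by
    have h₁ : 1 ≤ C * y := by
      calc (1 : ℝ) = y⁻¹ * y := (inv_mul_cancel₀ hy.ne').symm
        _ ≤ C * y := by gcongr; exact le_max_right _ _
    have h₂ : (k : ℝ) ≤ C * k := le_mul_of_one_le_left k.cast_nonneg (le_max_left _ _)
    linarith
  rw [Real.rpow_natCast, abs_of_pos (by linarith), add_comm (k : ℝ), pow_succ]
  calc (1 + (k : ℝ)) / ((y + k) ^ n * (y + k)) ≤ C * (y + k) / ((y + k) ^ n * (y + k)) := by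
        gcongr
    _ = C * (1 / (y + k) ^ n) := by field_simp

theorem stmt_5 (n : ℕ) (hn : 2 ≤ n) (x : ℝ) (hx : 0 < x) :
    (psi2 n (x + 1)) ^ 2 ≤ psi2 n x * psi2 n (x + 2) := by
  set S : ℝ → ℝ := fun y => ∑' k : ℕ, (1 + (k : ℝ)) / (y + k) ^ (n + 1)
  have hS : S (x + 1) ^ 2 ≤ S x * S (x + 2) := by
    refine tsum_sq_le_tsum_mul_tsum_of_sq_le_mul (summable_one_add_div_add_pow hn hx)
      (summable_one_add_div_add_pow hn (by linarith)) (fun k => by positivity)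
      (fun k => by positivity) fun k => ?_
    convert sq_div_add_one_pow_le (1 + (k : ℝ)) (by positivity : 0 < x + k) (n + 1)
      using 4 <;> ring
  have hpsi2 (y : ℝ) : psi2 n y = (-1) ^ (n + 1) * n.factorial * S y := rfl
  set e : ℝ := (-1) ^ (n + 1) * n.factorial
  calc (psi2 n (x + 1)) ^ 2 = e ^ 2 * S (x + 1) ^ 2 := by rw [hpsi2]; ring
    _ ≤ e ^ 2 * (S x * S (x + 2)) := by gcongr
    _ = psi2 n x * psi2 n (x + 2) := by rw [hpsi2, hpsi2]; ring
end

section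
/- For every integer n ≥ 2 and reals x, y > 0, |ψ₂⁽ⁿ⁾(x·a + y·(1-a))| ≤ |ψ₂⁽ⁿ⁾(x)|^a · |ψ₂⁽ⁿ⁾(y)|^{1-a} for all a ∈ [0,1]; i.e., x ↦ (-1)^{n+1} ψ₂⁽ⁿ⁾(x) is logarithmically convex on (0,∞). -/
/-!
Each term `(1 + k) / (x + k) ^ (n + 1)` is log-convex in `x`, by the weighted AM-GM inequality
`(x + k) ^ a * (y + k) ^ (1 - a) ≤ a * (x + k) + (1 - a) * (y + k)`, and Hölder's inequality with
exponents `1 / a` and `1 / (1 - a)` shows that a convergent sum of log-convex functions is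
log-convex.
-/

open Real

lemma div_pow_convexComb_le_rpow_mul_rpow {c p q a : ℝ} (m : ℕ) (hc : 0 ≤ c) (hp : 0 < p)
    (hq : 0 < q) (ha : a ∈ Set.Icc (0 : ℝ) 1) :
    c / (p * a + q * (1 - a)) ^ m ≤ (c / p ^ m) ^ a * (c / q ^ m) ^ (1 - a) := by
  obtain ⟨ha0, ha1⟩ := ha
  have hamgm : p ^ a * q ^ (1 - a) ≤ p * a + q * (1 - a) := by
    have := geom_mean_le_arith_mean2_weighted ha0 (sub_nonneg.2 ha1) hp.le hq.le (by ring)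
    linarith
  calc c / (p * a + q * (1 - a)) ^ m ≤ c / (p ^ a * q ^ (1 - a)) ^ m := by gcongr
    _ = (c / p ^ m) ^ a * (c / q ^ m) ^ (1 - a) := by
      rw [div_rpow hc (by positivity), div_rpow hc (by positivity), div_mul_div_comm,
        ← rpow_add' hc (by norm_num), add_sub_cancel, rpow_one, mul_pow,
        rpow_pow_comm hp.le, rpow_pow_comm hq.le]

theorem summable_and_tsum_rpow_mul_rpow_le {ι : Type*} {u v : ι → ℝ} (hu : ∀ i, 0 ≤ u i)
    (hv : ∀ i, 0 ≤ v i) (hu_sum : Summable u) (hv_sum : Summable v) {a : ℝ}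
    (ha : a ∈ Set.Icc (0 : ℝ) 1) :
    Summable (fun i => u i ^ a * v i ^ (1 - a)) ∧
      ∑' i, u i ^ a * v i ^ (1 - a) ≤ (∑' i, u i) ^ a * (∑' i, v i) ^ (1 - a) := by
  obtain ⟨ha0, ha1⟩ := ha
  rcases ha0.eq_or_lt with rfl | ha0
  · simpa using hv_sum
  rcases ha1.eq_or_lt with rfl | ha1
  · simpa using hu_sum
  have hpow {w : ι → ℝ} (hw : ∀ i, 0 ≤ w i) {b : ℝ} (hb : b ≠ 0) :
      (fun i => (w i ^ b) ^ b⁻¹) = w := by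
    ext i; rw [← rpow_mul (hw i), mul_inv_cancel₀ hb, rpow_one]
  have := summable_and_inner_le_Lp_mul_Lq_tsum_of_nonneg
    (Real.HolderConjugate.inv_one_sub_inv ha0 ha1) (fun i => rpow_nonneg (hu i) a)
    (fun i => rpow_nonneg (hv i) (1 - a)) (by rwa [hpow hu ha0.ne'])
    (by rwa [hpow hv (sub_ne_zero.2 ha1.ne')])
  simpa [hpow hu ha0.ne', hpow hv (sub_ne_zero.2 ha1.ne')] using this

noncomputable def psi2Term (n : ℕ) (x : ℝ) (k : ℕ) : ℝ :=
  (1 + (k : ℝ)) / (x + k) ^ (n + 1)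

lemma psi2Term_nonneg (n : ℕ) {x : ℝ} (hx : 0 < x) (k : ℕ) : 0 ≤ psi2Term n x k := by
  unfold psi2Term; positivity

lemma summable_psi2Term {n : ℕ} (hn : 2 ≤ n) {x : ℝ} (hx : 0 < x) :
    Summable (psi2Term n x) := by
  set m := min x 1
  have hm : 0 < m := lt_min hx one_pos
  have hdom : Summable fun k : ℕ => (m ^ (n + 1))⁻¹ * (1 / ((k + 1 : ℕ) : ℝ) ^ n) :=
    ((summable_nat_add_iff 1).mpr (summable_one_div_nat_pow.mpr hn)).mul_left _
  refine .of_nonneg_of_le (psi2Term_nonneg n hx) (fun k => ?_) hdom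
  have hmk : m * (1 + k) ≤ x + k := by
    nlinarith [min_le_left x 1, min_le_right x 1, (Nat.cast_nonneg k : (0 : ℝ) ≤ k)]
  calc psi2Term n x k ≤ (1 + k) / (m * (1 + k)) ^ (n + 1) := by unfold psi2Term; gcongr
    _ = (m ^ (n + 1))⁻¹ * (1 / ((k + 1 : ℕ) : ℝ) ^ n) := by
      rw [mul_pow, pow_succ (1 + (k : ℝ))]
      push_cast
      field_simp
      ring

lemma abs_psi2 (n : ℕ) {x : ℝ} (hx : 0 < x) :
    |psi2 n x| = n.factorial * ∑' k, psi2Term n x k := by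
  rw [psi2, abs_mul, abs_mul, abs_pow, abs_neg, abs_one, one_pow, one_mul, Nat.abs_cast]
  exact congrArg _ (abs_of_nonneg (tsum_nonneg (psi2Term_nonneg n hx)))

lemma psi2Term_convexComb_le (n : ℕ) {x y a : ℝ} (hx : 0 < x) (hy : 0 < y)
    (ha : a ∈ Set.Icc (0 : ℝ) 1) (k : ℕ) :
    psi2Term n (x * a + y * (1 - a)) k ≤ psi2Term n x k ^ a * psi2Term n y k ^ (1 - a) := by
  have hk : (0 : ℝ) ≤ k := k.cast_nonneg
  have hshift : x * a + y * (1 - a) + k = (x + k) * a + (y + k) * (1 - a) := by ring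
  rw [psi2Term, hshift]
  exact div_pow_convexComb_le_rpow_mul_rpow (n + 1) (by positivity) (by positivity)
    (by positivity) ha

theorem stmt_6 (n : ℕ) (hn : 2 ≤ n) (x y : ℝ) (hx : 0 < x) (hy : 0 < y)
    (a : ℝ) (ha : a ∈ Set.Icc (0 : ℝ) 1) :
    |psi2 n (x * a + y * (1 - a))| ≤ |psi2 n x| ^ a * |psi2 n y| ^ (1 - a) := by
  have hz : 0 < x * a + y * (1 - a) := by
    nlinarith [lt_min hx hy, mul_nonneg (sub_nonneg.2 (min_le_left x y)) ha.1,
      mul_nonneg (sub_nonneg.2 (min_le_right x y)) (sub_nonneg.2 ha.2)]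
  obtain ⟨hsum, hholder⟩ := summable_and_tsum_rpow_mul_rpow_le (psi2Term_nonneg n hx)
    (psi2Term_nonneg n hy) (summable_psi2Term hn hx) (summable_psi2Term hn hy) ha
  have hfac : (0 : ℝ) ≤ n.factorial := n.factorial.cast_nonneg
  rw [abs_psi2 n hz, abs_psi2 n hx, abs_psi2 n hy,
    mul_rpow hfac (tsum_nonneg (psi2Term_nonneg n hx)),
    mul_rpow hfac (tsum_nonneg (psi2Term_nonneg n hy)), mul_mul_mul_comm,
    ← rpow_add' hfac (by norm_num), add_sub_cancel, rpow_one]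
  gcongr
  calc ∑' k, psi2Term n (x * a + y * (1 - a)) k
      ≤ ∑' k, psi2Term n x k ^ a * psi2Term n y k ^ (1 - a) :=
        (summable_psi2Term hn hz).tsum_le_tsum (psi2Term_convexComb_le n hx hy ha) hsum
    _ ≤ _ := hholder
end

section
/- For every integer n ≥ 2, lim_{x→∞} x^{n-1} ψ₂⁽ⁿ⁾(x) = (-1)^{n-1} (n-2)!. -/
open Filter

private lemma pow_sub_pow_upper {a b : ℝ} (ha : 0 ≤ a) (hab : a ≤ b) (m : ℕ) :
    b ^ (m + 1) - a ^ (m + 1) ≤ (m + 1) * b ^ m * (b - a) := by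
  induction m with
  | zero => simp
  | succ m ih =>
    have hb : 0 ≤ b := le_trans ha hab
    have hpow : a ^ (m + 1) ≤ b ^ (m + 1) := pow_le_pow_left₀ ha hab _
    have h1 : b ^ (m + 2) - a ^ (m + 2) = b * (b ^ (m + 1) - a ^ (m + 1)) + (b - a) * a ^ (m + 1) := by
      ring
    have h2 : b * (b ^ (m + 1) - a ^ (m + 1)) ≤ b * ((m + 1) * b ^ m * (b - a)) :=
      mul_le_mul_of_nonneg_left ih hb
    have h3 : (b - a) * a ^ (m + 1) ≤ (b - a) * b ^ (m + 1) :=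
      mul_le_mul_of_nonneg_left hpow (by linarith)
    have hbm : b * ((m + 1) * b ^ m * (b - a)) = (m + 1) * b ^ (m + 1) * (b - a) := by ring
    push_cast
    nlinarith [h1, h2, h3]

private lemma pow_sub_pow_lower {a b : ℝ} (ha : 0 ≤ a) (hab : a ≤ b) (m : ℕ) :
    (m + 1) * a ^ m * (b - a) ≤ b ^ (m + 1) - a ^ (m + 1) := by
  induction m with
  | zero => simp
  | succ m ih =>
    have hb : 0 ≤ b := le_trans ha hab
    have hpow : a ^ (m + 1) ≤ b ^ (m + 1) := pow_le_pow_left₀ ha hab _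
    have h1 : b ^ (m + 2) - a ^ (m + 2) = a * (b ^ (m + 1) - a ^ (m + 1)) + (b - a) * b ^ (m + 1) := by
      ring
    have h2 : a * ((m + 1) * a ^ m * (b - a)) ≤ a * (b ^ (m + 1) - a ^ (m + 1)) :=
      mul_le_mul_of_nonneg_left ih ha
    have h3 : (b - a) * a ^ (m + 1) ≤ (b - a) * b ^ (m + 1) :=
      mul_le_mul_of_nonneg_left hpow (by linarith)
    have e2 : a * (((m : ℝ) + 1) * a ^ m * (b - a)) = ((m : ℝ) + 1) * a ^ (m + 1) * (b - a) := by
      ring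
    push_cast
    nlinarith [h1, h2, h3, e2]

private lemma inv_bounds (a : ℝ) (ha : 1 ≤ a) (j : ℕ) :
    ((j : ℝ) + 1) * ((a + 1) ^ (j + 2))⁻¹ ≤ (a ^ (j + 1))⁻¹ - ((a + 1) ^ (j + 1))⁻¹ ∧
      (a ^ (j + 1))⁻¹ - ((a + 1) ^ (j + 1))⁻¹ ≤ ((j : ℝ) + 1) * (a ^ (j + 2))⁻¹ := by
  have ha0 : (0 : ℝ) < a := by linarith
  have hb0 : (0 : ℝ) < a + 1 := by linarith
  have hfrac : (a ^ (j + 1))⁻¹ - ((a + 1) ^ (j + 1))⁻¹ =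
      ((a + 1) ^ (j + 1) - a ^ (j + 1)) / (a ^ (j + 1) * (a + 1) ^ (j + 1)) := by
    field_simp
  have hup : (a + 1) ^ (j + 1) - a ^ (j + 1) ≤ ((j : ℝ) + 1) * (a + 1) ^ j := by
    have := pow_sub_pow_upper (le_of_lt ha0) (by linarith : a ≤ a + 1) j
    simpa using this
  have hlo : ((j : ℝ) + 1) * a ^ j ≤ (a + 1) ^ (j + 1) - a ^ (j + 1) := by
    have := pow_sub_pow_lower (le_of_lt ha0) (by linarith : a ≤ a + 1) j
    simpa using this
  constructor
  · rw [hfrac, le_div_iff₀ (by positivity)]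
    have key : ((j : ℝ) + 1) * ((a + 1) ^ (j + 2))⁻¹ * (a ^ (j + 1) * (a + 1) ^ (j + 1)) =
        ((j : ℝ) + 1) * a ^ (j + 1) / (a + 1) := by
      field_simp
      ring
    rw [key, div_le_iff₀ hb0]
    have h1 : a ^ (j + 1) ≤ a ^ j * (a + 1) := by
      rw [pow_succ]
      exact mul_le_mul_of_nonneg_left (by linarith) (by positivity)
    nlinarith [hlo, pow_pos ha0 j]
  · rw [hfrac, div_le_iff₀ (by positivity)]
    have key : ((j : ℝ) + 1) * (a ^ (j + 2))⁻¹ * (a ^ (j + 1) * (a + 1) ^ (j + 1)) =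
        ((j : ℝ) + 1) * (a + 1) ^ (j + 1) / a := by
      field_simp
      ring
    rw [key, le_div_iff₀ ha0]
    have h1 : (a + 1) ^ j * a ≤ (a + 1) ^ (j + 1) := by
      rw [pow_succ]
      exact mul_le_mul_of_nonneg_left (by linarith) (by positivity)
    nlinarith [hup, pow_pos hb0 j]

private lemma pos_aux {x : ℝ} (hx : 1 ≤ x) (k : ℕ) : (0 : ℝ) < x + k := by
  have : (0 : ℝ) ≤ (k : ℝ) := Nat.cast_nonneg k
  linarith

private lemma telescope (p : ℕ) {x : ℝ} (hx : 1 ≤ x) :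
    HasSum (fun k : ℕ => ((x + k) ^ (p + 1))⁻¹ - ((x + k + 1) ^ (p + 1))⁻¹) ((x ^ (p + 1))⁻¹) := by
  have hpos := fun k => pos_aux hx k
  rw [hasSum_iff_tendsto_nat_of_nonneg]
  · have hsum : ∀ N : ℕ, ∑ i ∈ Finset.range N, (((x + i) ^ (p + 1))⁻¹ - ((x + i + 1) ^ (p + 1))⁻¹) =
        (x ^ (p + 1))⁻¹ - ((x + N) ^ (p + 1))⁻¹ := by
      intro N
      have h := Finset.sum_range_sub' (fun i : ℕ => ((x + (i : ℝ)) ^ (p + 1))⁻¹) N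
      push_cast at h
      simpa [add_assoc] using h
    simp only [hsum]
    have h0 : Tendsto (fun N : ℕ => ((x + N) ^ (p + 1))⁻¹) atTop (nhds 0) := by
      apply squeeze_zero (fun N => by positivity) (g := fun N : ℕ => 1 / ((N : ℝ) + 1))
      · intro N
        rw [one_div]
        apply inv_anti₀ (by positivity)
        have hN : (0 : ℝ) ≤ (N : ℝ) := Nat.cast_nonneg N
        calc ((N : ℝ) + 1) ≤ x + N := by linarith
          _ ≤ (x + N) ^ (p + 1) := le_self_pow₀ (by linarith) (by omega)
      · exact tendsto_one_div_add_atTop_nhds_zero_nat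
    simpa using tendsto_const_nhds.sub h0
  · intro k
    have h1 : ((x + k + 1) ^ (p + 1))⁻¹ ≤ ((x + k) ^ (p + 1))⁻¹ := by
      apply inv_anti₀ (by positivity)
      exact pow_le_pow_left₀ (le_of_lt (hpos k)) (by linarith) _
    linarith

private lemma summable_aux (p : ℕ) {x : ℝ} (hx : 1 ≤ x) :
    Summable (fun k : ℕ => ((x + k) ^ (p + 2))⁻¹) := by
  have h2 : Summable (fun k : ℕ => ((1 + (k : ℝ)) ^ 2)⁻¹) := by
    have h := (Real.summable_one_div_nat_pow (p := 2)).2 one_lt_two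
    have h' := (summable_nat_add_iff (f := fun n : ℕ => 1 / (n : ℝ) ^ 2) 1).2 h
    apply h'.congr
    intro k
    push_cast
    rw [one_div, add_comm (k : ℝ) 1]
  apply Summable.of_nonneg_of_le (fun k => by positivity) _ h2
  intro k
  have hk : (0 : ℝ) ≤ (k : ℝ) := Nat.cast_nonneg k
  apply inv_anti₀ (by positivity)
  calc (1 + (k : ℝ)) ^ 2 ≤ (x + k) ^ 2 := pow_le_pow_left₀ (by linarith) (by linarith) _
    _ ≤ (x + k) ^ (p + 2) := pow_le_pow_right₀ (by linarith) (by omega)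

private lemma tsum_bounds (p : ℕ) {x : ℝ} (hx : 1 ≤ x) :
    (x ^ (p + 1))⁻¹ / ((p : ℝ) + 1) ≤ ∑' k : ℕ, ((x + k) ^ (p + 2))⁻¹ ∧
      ∑' k : ℕ, ((x + k) ^ (p + 2))⁻¹ ≤ (x ^ (p + 1))⁻¹ / ((p : ℝ) + 1) + (x ^ (p + 2))⁻¹ := by
  have hpos := fun k => pos_aux hx k
  have hp1 : (0 : ℝ) < (p : ℝ) + 1 := by positivity
  have htel := telescope p hx
  have hsummable := summable_aux p hx
  have hxk1 : ∀ k : ℕ, 1 ≤ x + k := fun k => by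
    have hk : (0 : ℝ) ≤ (k : ℝ) := Nat.cast_nonneg k
    linarith
  -- lower bound: x^{-(p+1)} ≤ (p+1) * T
  have hub : ∀ k : ℕ, ((x + k) ^ (p + 1))⁻¹ - ((x + k + 1) ^ (p + 1))⁻¹ ≤
      ((p : ℝ) + 1) * ((x + k) ^ (p + 2))⁻¹ := fun k => (inv_bounds (x + k) (hxk1 k) p).2
  have hlb : ∀ k : ℕ, ((p : ℝ) + 1) * ((x + k + 1) ^ (p + 2))⁻¹ ≤
      ((x + k) ^ (p + 1))⁻¹ - ((x + k + 1) ^ (p + 1))⁻¹ := fun k => (inv_bounds (x + k) (hxk1 k) p).1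
  constructor
  · have h1 : (x ^ (p + 1))⁻¹ ≤ ∑' k : ℕ, ((p : ℝ) + 1) * ((x + k) ^ (p + 2))⁻¹ := by
      rw [← htel.tsum_eq]
      exact Summable.tsum_le_tsum hub htel.summable (hsummable.mul_left _)
    rw [tsum_mul_left] at h1
    rw [div_le_iff₀ hp1]
    linarith
  · have hshift : Summable (fun k : ℕ => ((x + k + 1) ^ (p + 2))⁻¹) := by
      apply ((summable_nat_add_iff (f := fun k : ℕ => ((x + k) ^ (p + 2))⁻¹) 1).2 hsummable).congr
      intro k
      push_cast
      ring_nf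
    have h1 : ∑' k : ℕ, ((p : ℝ) + 1) * ((x + k + 1) ^ (p + 2))⁻¹ ≤ (x ^ (p + 1))⁻¹ := by
      rw [← htel.tsum_eq]
      exact Summable.tsum_le_tsum hlb (hshift.mul_left _) htel.summable
    rw [tsum_mul_left] at h1
    have h2 : (∑' k : ℕ, ((x + k) ^ (p + 2))⁻¹) =
        (x ^ (p + 2))⁻¹ + ∑' k : ℕ, ((x + k + 1) ^ (p + 2))⁻¹ := by
      rw [Summable.tsum_eq_zero_add hsummable]
      congr 1
      · norm_num
      · apply tsum_congr
        intro k
        push_cast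
        ring_nf
    have h3 : (∑' k : ℕ, ((x + k + 1) ^ (p + 2))⁻¹) ≤ (x ^ (p + 1))⁻¹ / ((p : ℝ) + 1) := by
      rw [le_div_iff₀ hp1]
      nlinarith [h1]
    linarith [h2, h3]

private lemma split_tsum (m : ℕ) {x : ℝ} (hx : 1 ≤ x) :
    (∑' k : ℕ, (1 + (k : ℝ)) / (x + k) ^ (m + 3)) =
      (∑' k : ℕ, ((x + k) ^ (m + 2))⁻¹) + (1 - x) * ∑' k : ℕ, ((x + k) ^ (m + 3))⁻¹ := by
  rw [← tsum_mul_left,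
    ← Summable.tsum_add (summable_aux m hx) ((summable_aux (m + 1) hx).mul_left (1 - x))]
  apply tsum_congr
  intro k
  have h := pos_aux hx k
  have hne : x + (k : ℝ) ≠ 0 := ne_of_gt h
  field_simp
  ring

theorem stmt_7 (n : ℕ) (hn : 2 ≤ n) :
    Filter.Tendsto (fun x : ℝ => x ^ (n - 1) * psi2 n x) Filter.atTop
      (nhds ((-1) ^ (n - 1) * ((n - 2).factorial : ℝ))) := by
  obtain ⟨m, rfl⟩ : ∃ m, n = m + 2 := ⟨n - 2, by omega⟩
  have hsub1 : m + 2 - 1 = m + 1 := rfl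
  have hsub2 : m + 2 - 2 = m := rfl
  rw [hsub1, hsub2]
  have hm1 : (0 : ℝ) < (m : ℝ) + 1 := by positivity
  have hm2 : (0 : ℝ) < (m : ℝ) + 2 := by positivity
  set C : ℝ := (-1) ^ (m + 3) * ((m + 2).factorial : ℝ) with hC
  set A : ℝ → ℝ := fun x => ∑' k : ℕ, ((x + k) ^ (m + 2))⁻¹ with hA
  set B : ℝ → ℝ := fun x => ∑' k : ℕ, ((x + k) ^ (m + 3))⁻¹ with hB
  have hinv : Tendsto (fun x : ℝ => x⁻¹) atTop (nhds 0) := tendsto_inv_atTop_zero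
  -- limit of x^(m+1) * A x
  have T1 : Tendsto (fun x : ℝ => x ^ (m + 1) * A x) atTop (nhds (((m : ℝ) + 1)⁻¹)) := by
    apply tendsto_of_tendsto_of_tendsto_of_le_of_le'
      (g := fun _ : ℝ => ((m : ℝ) + 1)⁻¹) (h := fun x : ℝ => ((m : ℝ) + 1)⁻¹ + x⁻¹)
      tendsto_const_nhds (by simpa using tendsto_const_nhds.add hinv)
    · filter_upwards [eventually_ge_atTop (1 : ℝ)] with x hx
      have hx0 : (0 : ℝ) < x := by linarith
      have hb := (tsum_bounds m hx).1
      have h := mul_le_mul_of_nonneg_left hb (le_of_lt (pow_pos hx0 (m + 1)))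
      have he : x ^ (m + 1) * ((x ^ (m + 1))⁻¹ / ((m : ℝ) + 1)) = ((m : ℝ) + 1)⁻¹ := by
        field_simp
      rw [he] at h
      exact h
    · filter_upwards [eventually_ge_atTop (1 : ℝ)] with x hx
      have hx0 : (0 : ℝ) < x := by linarith
      have hb := (tsum_bounds m hx).2
      have h := mul_le_mul_of_nonneg_left hb (le_of_lt (pow_pos hx0 (m + 1)))
      have he : x ^ (m + 1) * ((x ^ (m + 1))⁻¹ / ((m : ℝ) + 1) + (x ^ (m + 2))⁻¹) =
          ((m : ℝ) + 1)⁻¹ + x⁻¹ := by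
        field_simp
        ring
      rw [he] at h
      exact h
  -- limit of (1-x)*x⁻¹
  have hbase : Tendsto (fun x : ℝ => (1 - x) * x⁻¹) atTop (nhds (-1)) := by
    have h' : Tendsto (fun x : ℝ => x⁻¹ - 1) atTop (nhds (-1)) := by
      simpa using hinv.sub_const 1
    apply Tendsto.congr' _ h'
    filter_upwards [eventually_ge_atTop (1 : ℝ)] with x hx
    have hx0 : x ≠ 0 := by intro h; rw [h] at hx; linarith
    field_simp
  -- limit of x^(m+1) * ((1-x) * B x)
  have T2 : Tendsto (fun x : ℝ => x ^ (m + 1) * ((1 - x) * B x)) atTop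
      (nhds (-(((m : ℝ) + 2)⁻¹))) := by
    apply tendsto_of_tendsto_of_tendsto_of_le_of_le'
      (g := fun x : ℝ => (1 - x) * x⁻¹ * (((m : ℝ) + 2)⁻¹ + x⁻¹))
      (h := fun x : ℝ => (1 - x) * x⁻¹ * ((m : ℝ) + 2)⁻¹)
    · have := hbase.mul ((tendsto_const_nhds (x := ((m : ℝ) + 2)⁻¹)).add hinv)
      simpa using this
    · have := hbase.mul (tendsto_const_nhds (x := ((m : ℝ) + 2)⁻¹))
      simpa using this
    · filter_upwards [eventually_ge_atTop (1 : ℝ)] with x hx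
      have hx0 : (0 : ℝ) < x := by linarith
      have hb := (tsum_bounds (m + 1) hx).2
      push_cast at hb
      have h1x : 1 - x ≤ 0 := by linarith
      have h := mul_le_mul_of_nonpos_left hb h1x
      have h' := mul_le_mul_of_nonneg_left h (le_of_lt (pow_pos hx0 (m + 1)))
      have he : x ^ (m + 1) * ((1 - x) * ((x ^ (m + 1 + 1))⁻¹ / ((m : ℝ) + 1 + 1) +
          (x ^ (m + 1 + 2))⁻¹)) = (1 - x) * x⁻¹ * (((m : ℝ) + 2)⁻¹ + x⁻¹) := by
        field_simp
        ring
      rw [he] at h'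
      exact h'
    · filter_upwards [eventually_ge_atTop (1 : ℝ)] with x hx
      have hx0 : (0 : ℝ) < x := by linarith
      have hb := (tsum_bounds (m + 1) hx).1
      push_cast at hb
      have h1x : 1 - x ≤ 0 := by linarith
      have h := mul_le_mul_of_nonpos_left hb h1x
      have h' := mul_le_mul_of_nonneg_left h (le_of_lt (pow_pos hx0 (m + 1)))
      have he : x ^ (m + 1) * ((1 - x) * ((x ^ (m + 1 + 1))⁻¹ / ((m : ℝ) + 1 + 1))) =
          (1 - x) * x⁻¹ * ((m : ℝ) + 2)⁻¹ := by
        field_simp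
        ring
      rw [he] at h'
      exact h'
  have main : Tendsto (fun x : ℝ => C * (x ^ (m + 1) * A x + x ^ (m + 1) * ((1 - x) * B x)))
      atTop (nhds (C * (((m : ℝ) + 1)⁻¹ + -(((m : ℝ) + 2)⁻¹)))) := (T1.add T2).const_mul C
  have hval : C * (((m : ℝ) + 1)⁻¹ + -(((m : ℝ) + 2)⁻¹)) =
      (-1) ^ (m + 1) * (m.factorial : ℝ) := by
    have hfact : ((m + 2).factorial : ℝ) = ((m : ℝ) + 2) * (((m : ℝ) + 1) * (m.factorial : ℝ)) := by
      rw [Nat.factorial_succ, Nat.factorial_succ]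
      push_cast
      ring
    have hsgn : ((-1 : ℝ)) ^ (m + 3) = (-1 : ℝ) ^ (m + 1) := by
      rw [show m + 3 = m + 1 + 2 by ring, pow_add]
      norm_num
    rw [hC, hfact, hsgn]
    field_simp
    ring
  rw [hval] at main
  apply main.congr'
  filter_upwards [eventually_ge_atTop (1 : ℝ)] with x hx
  have hsplit := split_tsum m hx
  show C * (x ^ (m + 1) * A x + x ^ (m + 1) * ((1 - x) * B x)) = x ^ (m + 1) * psi2 (m + 2) x
  rw [psi2]
  have h3 : m + 2 + 1 = m + 3 := rfl
  rw [h3, hsplit, hA, hB, hC]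
  push_cast
  ring
end

section
/- For all x > 0 and all integers n ≥ 2, Σ_{k=0}^∞ (1+k)/(x+k)^n · Σ_{k=0}^∞ (1+k)/(x+k)^{n+2} − (Σ_{k=0}^∞ (1+k)/(x+k)^{n+1})² = Σ_{k=0}^∞ Σ_{j=k+1}^∞ (k−j)²(1+k)(1+j)[(x+k)(x+j)]^{-n-2}. -/
/-!
With `u k = (1 + k) / (x + k) ^ n` and `y k = (x + k)⁻¹` the left side is
`(∑ u) (∑ u y²) - (∑ u y)²` and the summand on the right is `u k u j (y k - y j)²`, so the
identity is Lagrange's identity. It holds for any nonnegative summable weights `u` with `u y²`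
summable: then `u y` is absolutely summable, the left side is the sum over all pairs of
`u k (u j y j²) - (u k y k)(u j y j)`, and symmetrising this summand gives `u k u j (y k - y j)²`,
whose sum over all pairs is twice its sum over the pairs with `k < j`.
-/

theorem summable_one_add_div_add_pow_s13 {x : ℝ} (hx : 0 < x) {m : ℕ} (hm : 3 ≤ m) :
    Summable fun k : ℕ => (1 + k) / (x + k) ^ m := by
  obtain ⟨p, rfl⟩ : ∃ p, m = p + 1 := ⟨m - 1, by omega⟩
  have hp : Summable fun k : ℕ => 1 / |k + x| ^ (p : ℝ) :=
    (Real.summable_one_div_nat_add_rpow x p).2 (by exact_mod_cast (by omega : 1 < p))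
  refine (hp.mul_left (1 + x⁻¹)).of_nonneg_of_le (fun k => by positivity) fun k => ?_
  have hk : 0 < x + k := by positivity
  have hlin : (1 + k : ℝ) / (x + k) ≤ 1 + x⁻¹ := by
    rw [div_le_iff₀ hk]
    nlinarith [mul_inv_cancel₀ hx.ne', mul_nonneg (inv_pos.2 hx).le (Nat.cast_nonneg (α := ℝ) k)]
  rw [Real.rpow_natCast, add_comm (k : ℝ) x, abs_of_pos hk, pow_succ', ← div_div,
    div_eq_mul_one_div]
  gcongr

theorem HasSum.of_add_swap {ι : Type*} {g : ι × ι → ℝ} {a : ℝ} (hg : Summable g)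
    (h : HasSum (fun p : ι × ι => g p + g p.swap) (2 * a)) : HasSum g a := by
  have hswap : HasSum (fun p : ι × ι => g p.swap) (∑' p, g p) :=
    (Equiv.prodComm ι ι).hasSum_iff.2 hg.hasSum
  have hsum := (hg.hasSum.add hswap).unique h
  convert hg.hasSum using 1
  linarith

section Lagrange

variable {ι : Type*} {u y : ι → ℝ}

theorem summable_norm_mul_of_summable_mul_sq (hu : 0 ≤ u) (h0 : Summable u)
    (h2 : Summable fun i => u i * y i ^ 2) : Summable fun i => ‖u i * y i‖ := by
  refine (h0.add h2).of_nonneg_of_le (fun i => norm_nonneg _) fun i => ?_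
  have hy : |y i| ≤ 1 + y i ^ 2 := by nlinarith [sq_abs (y i), abs_nonneg (y i)]
  rw [norm_mul, Real.norm_of_nonneg (hu i), Real.norm_eq_abs]
  nlinarith [mul_le_mul_of_nonneg_left hy (hu i)]

theorem hasSum_lagrange [LinearOrder ι] (hu : 0 ≤ u) (h0 : Summable u)
    (h2 : Summable fun i => u i * y i ^ 2) :
    HasSum (fun p : ι × ι => if p.1 < p.2 then u p.1 * u p.2 * (y p.1 - y p.2) ^ 2 else 0)
      ((∑' i, u i) * (∑' i, u i * y i ^ 2) - (∑' i, u i * y i) ^ 2) := by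
  have h1 := summable_norm_mul_of_summable_mul_sq hu h0 h2
  have h02 : HasSum (fun p : ι × ι => u p.1 * (u p.2 * y p.2 ^ 2))
      ((∑' i, u i) * ∑' i, u i * y i ^ 2) :=
    h0.hasSum.mul h2.hasSum (h0.mul_of_nonneg h2 hu fun i => mul_nonneg (hu i) (sq_nonneg _))
  have h11 : HasSum (fun p : ι × ι => u p.1 * y p.1 * (u p.2 * y p.2))
      ((∑' i, u i * y i) ^ 2) := by
    have hs1 : Summable fun i => u i * y i := h1.of_norm
    rw [sq]
    exact HasSum.mul (f := fun i => u i * y i) (g := fun i => u i * y i) hs1.hasSum hs1.hasSum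
      (summable_mul_of_summable_norm (f := fun i => u i * y i) (g := fun i => u i * y i) h1 h1)
  have hF := h02.sub h11
  have hH : HasSum (fun p : ι × ι => u p.1 * u p.2 * (y p.1 - y p.2) ^ 2)
      (2 * ((∑' i, u i) * (∑' i, u i * y i ^ 2) - (∑' i, u i * y i) ^ 2)) := by
    rw [two_mul]
    refine (hF.add ((Equiv.prodComm ι ι).hasSum_iff.2 hF)).congr_fun fun p => ?_
    simp only [Function.comp_apply, Equiv.prodComm_apply, Prod.fst_swap, Prod.snd_swap]
    ring
  refine .of_add_swap ((hH.summable.indicator {p | p.1 < p.2}).congr fun p => ?_) ?_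
  · simp [Set.indicator_apply]
  · refine hH.congr_fun fun ⟨i, j⟩ => ?_
    rcases lt_trichotomy i j with h | rfl | h
    · simp [h, h.not_gt]
    · simp
    · simp [h, h.not_gt]
      ring

end Lagrange

theorem stmt_13 (n : ℕ) (hn : 3 ≤ n) (x : ℝ) (hx : 0 < x) :
    (∑' k : ℕ, (1 + (k : ℝ)) / (x + k) ^ n) *
      (∑' k : ℕ, (1 + (k : ℝ)) / (x + k) ^ (n + 2)) -
      (∑' k : ℕ, (1 + (k : ℝ)) / (x + k) ^ (n + 1)) ^ 2 =
    ∑' k : ℕ, ∑' j : ℕ, if k < j then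
        ((k : ℝ) - j) ^ 2 * (1 + k) * (1 + j) / ((x + k) * (x + j)) ^ (n + 2)
      else 0 := by
  have hxk (k : ℕ) : 0 < x + k := by positivity
  have hpow (m k : ℕ) : (1 + (k : ℝ)) / (x + k) ^ n * (x + k)⁻¹ ^ m =
      (1 + k) / (x + k) ^ (n + m) := by
    rw [inv_pow, ← div_eq_mul_inv, div_div, pow_add]
  have hpow_one (k : ℕ) : (1 + (k : ℝ)) / (x + k) ^ n * (x + k)⁻¹ =
      (1 + k) / (x + k) ^ (n + 1) := by
    simpa using hpow 1 k
  have hterm (k j : ℕ) : (1 + (k : ℝ)) / (x + k) ^ n * ((1 + j) / (x + j) ^ n) *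
      ((x + k)⁻¹ - (x + j)⁻¹) ^ 2 =
      ((k : ℝ) - j) ^ 2 * (1 + k) * (1 + j) / ((x + k) * (x + j)) ^ (n + 2) := by
    rw [mul_pow]
    field_simp [(hxk k).ne', (hxk j).ne']
    ring
  have hsum := hasSum_lagrange (u := fun k : ℕ => (1 + (k : ℝ)) / (x + k) ^ n)
    (y := fun k : ℕ => (x + k)⁻¹) (fun k => (div_pos (by positivity) (pow_pos (hxk k) n)).le)
    (summable_one_add_div_add_pow_s13 hx hn)
    (by simpa only [hpow] using summable_one_add_div_add_pow_s13 hx (m := n + 2) (by omega))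
  simp only [hpow, hpow_one, hterm] at hsum
  rw [← hsum.tsum_eq, hsum.summable.tsum_prod]
end

section
/- For every integer n ≥ 3, the function x ↦ (n/(n+1))·ψ₂⁽ⁿ⁻¹⁾(x)·ψ₂⁽ⁿ⁺¹⁾(x) − (ψ₂⁽ⁿ⁾(x))² is completely monotonic on (0,∞). -/
/-!
Write `S p x = ∑ₖ (1 + k) / (x + k) ^ p`, so that `ψ₂⁽ᵐ⁾ = (-1) ^ (m + 1) m! S (m + 1)` and the
function in question is `(n!)² (S n · S (n + 2) - S (n + 1) ²)`. Expanding the products as double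
series and symmetrising in the two summation indices `a, b` gives the Lagrange-type identity
`2 (S n S (n + 2) - S (n + 1) ²) = ∑_{a,b} (1 + a) (1 + b) (a - b)² / ((x + a) (x + b)) ^ (n + 2)`.
Differentiating such a pair sum with exponents `(p, q)` termwise yields minus a nonnegative
combination of the pair sums with exponents `(p + 1, q)` and `(p, q + 1)`; so the cone they span
consists of nonnegative functions and is stable under `f ↦ -f'`, whence every member is
completely monotone.
-/

open Set

theorem summable_one_add_pow_div_add_pow {x : ℝ} (hx : 0 < x) {s p : ℕ} (hp : s + 2 ≤ p) :
    Summable fun a : ℕ => (1 + (a : ℝ)) ^ s / (x + a) ^ p := by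
  obtain ⟨m, rfl⟩ : ∃ m, p = s + m := ⟨p - s, by omega⟩
  set d := min x 1
  have hinvsq : Summable fun a : ℕ => 1 / (1 + (a : ℝ)) ^ 2 := by
    simpa [add_comm] using
      (summable_nat_add_iff 1).2 (Real.summable_one_div_nat_pow.2 one_lt_two)
  refine .of_nonneg_of_le (fun a => by positivity) (fun a => ?_)
    (hinvsq.mul_left (1 / d ^ (s + m)))
  have hle : d * (1 + a) ≤ x + a := by
    nlinarith [min_le_left x 1, min_le_right x 1, a.cast_nonneg (α := ℝ)]
  calc (1 + (a : ℝ)) ^ s / (x + a) ^ (s + m)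
      ≤ (1 + (a : ℝ)) ^ s / (d * (1 + a)) ^ (s + m) := by gcongr
    _ = 1 / d ^ (s + m) * (1 / (1 + (a : ℝ)) ^ m) := by
        rw [mul_pow, pow_add (1 + (a : ℝ))]
        field_simp
    _ ≤ 1 / d ^ (s + m) * (1 / (1 + (a : ℝ)) ^ 2) := by
        gcongr
        · simp
        · omega

theorem two_mul_tsum_mul_tsum_sub_sq {ι : Type*} {f g h : ι → ℝ}
    (hf : Summable f) (hg : Summable g) (hh : Summable h) :
    2 * ((∑' i, f i) * (∑' i, h i) - (∑' i, g i) ^ 2) =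
      ∑' z : ι × ι, (f z.1 * h z.2 + f z.2 * h z.1 - 2 * (g z.1 * g z.2)) := by
  have hfh := summable_mul_of_summable_norm hf.norm hh.norm
  have hfh' : Summable fun z : ι × ι => f z.2 * h z.1 :=
    (Equiv.prodComm ι ι).summable_iff.2 hfh
  have hswap : ∑' z : ι × ι, f z.2 * h z.1 = ∑' z : ι × ι, f z.1 * h z.2 :=
    (Equiv.prodComm ι ι).tsum_eq fun z => f z.1 * h z.2
  have hgg := summable_mul_of_summable_norm hg.norm hg.norm
  rw [Summable.tsum_sub (hfh.add hfh') (hgg.mul_left 2), Summable.tsum_add hfh hfh', hswap,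
    tsum_mul_left, ← tsum_mul_tsum_of_summable_norm hf.norm hh.norm,
    ← tsum_mul_tsum_of_summable_norm hg.norm hg.norm]
  ring

theorem exists_eqOn_iteratedDeriv {C : (ℝ → ℝ) → Prop} {U : Set ℝ} (hU : IsOpen U)
    (hC : ∀ f, C f → ∃ g, C g ∧ ∀ x ∈ U, HasDerivAt f (-g x) x)
    {F f : ℝ → ℝ} (hf : C f) (hF : EqOn F f U) (k : ℕ) :
    ∃ g, C g ∧ EqOn (iteratedDeriv k F) (fun x => (-1) ^ k * g x) U := by
  induction k with
  | zero => exact ⟨f, hf, fun x hx => by simpa using hF hx⟩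
  | succ k ih =>
    obtain ⟨g, hg, hFg⟩ := ih
    obtain ⟨g', hg', hderiv⟩ := hC g hg
    refine ⟨g', hg', fun x hx => ?_⟩
    rw [iteratedDeriv_succ, (hFg.eventuallyEq_of_mem (hU.mem_nhds hx)).deriv_eq,
      ((hderiv x hx).const_mul _).deriv, pow_succ]
    ring

theorem neg_one_pow_mul_iteratedDeriv_nonneg {C : (ℝ → ℝ) → Prop} {U : Set ℝ} (hU : IsOpen U)
    (hC : ∀ f, C f → ∃ g, C g ∧ ∀ x ∈ U, HasDerivAt f (-g x) x)
    (hC_nonneg : ∀ f, C f → ∀ x ∈ U, 0 ≤ f x)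
    {F f : ℝ → ℝ} (hf : C f) (hF : EqOn F f U) (k : ℕ) {x : ℝ} (hx : x ∈ U) :
    0 ≤ (-1) ^ k * iteratedDeriv k F x := by
  obtain ⟨g, hg, hFg⟩ := exists_eqOn_iteratedDeriv hU hC hf hF k
  rw [hFg hx, ← mul_assoc, ← mul_pow]
  simpa using hC_nonneg g hg x hx

namespace Psi2

noncomputable def weightedHurwitz (p : ℕ) (x : ℝ) : ℝ :=
  ∑' k : ℕ, (1 + (k : ℝ)) / (x + k) ^ p

theorem summable_one_add_div_add_pow {p : ℕ} (hp : 3 ≤ p) {x : ℝ} (hx : 0 < x) :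
    Summable fun k : ℕ => (1 + (k : ℝ)) / (x + k) ^ p := by
  simpa using summable_one_add_pow_div_add_pow hx (s := 1) hp

theorem psi2_eq_weightedHurwitz (n : ℕ) (x : ℝ) :
    psi2 n x = (-1) ^ (n + 1) * n.factorial * weightedHurwitz (n + 1) x :=
  rfl

theorem psi2_mul_psi2_sub_sq {n : ℕ} (hn : 1 ≤ n) (x : ℝ) :
    (n : ℝ) / (n + 1) * psi2 (n - 1) x * psi2 (n + 1) x - psi2 n x ^ 2 =
      (n.factorial : ℝ) ^ 2 *
        (weightedHurwitz n x * weightedHurwitz (n + 2) x - weightedHurwitz (n + 1) x ^ 2) := by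
  obtain ⟨m, rfl⟩ : ∃ m, n = m + 1 := ⟨n - 1, by omega⟩
  have hs : ((-1 : ℝ) ^ m) ^ 2 = 1 := by rw [← pow_mul, pow_mul']; simp
  simp only [psi2_eq_weightedHurwitz, Nat.add_sub_cancel, Nat.factorial_succ, pow_succ]
  push_cast
  field_simp
  rw [hs, one_mul]

noncomputable def pairTerm (p q : ℕ) (x : ℝ) (ab : ℕ × ℕ) : ℝ :=
  (1 + (ab.1 : ℝ)) * (1 + (ab.2 : ℝ)) * ((ab.1 : ℝ) - ab.2) ^ 2 *
    (x + ab.1) ^ (-(p : ℤ)) * (x + ab.2) ^ (-(q : ℤ))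

noncomputable def pairSum (p q : ℕ) (x : ℝ) : ℝ :=
  ∑' ab, pairTerm p q x ab

theorem pairTerm_nonneg (p q : ℕ) {x : ℝ} (hx : 0 < x) (ab : ℕ × ℕ) : 0 ≤ pairTerm p q x ab := by
  unfold pairTerm
  positivity

theorem pairTerm_anti (p q : ℕ) {x y : ℝ} (hx : 0 < x) (hxy : x ≤ y) (ab : ℕ × ℕ) :
    pairTerm p q y ab ≤ pairTerm p q x ab := by
  have hpow (c : ℕ) (m : ℕ) : (y + c) ^ (-(m : ℤ)) ≤ (x + c) ^ (-(m : ℤ)) := by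
    simp only [zpow_neg, zpow_natCast]
    gcongr
  unfold pairTerm
  have hy : 0 < y := hx.trans_le hxy
  gcongr
  exacts [hpow _ _, hpow _ _]

theorem summable_pairTerm {p q : ℕ} (hp : 5 ≤ p) (hq : 5 ≤ q) {x : ℝ} (hx : 0 < x) :
    Summable (pairTerm p q x) := by
  have hprod := (summable_one_add_pow_div_add_pow hx (s := 3) hp).mul_of_nonneg
    (summable_one_add_pow_div_add_pow hx (s := 3) hq)
    (fun a => by positivity) (fun b => by positivity)
  refine .of_nonneg_of_le (pairTerm_nonneg p q hx) (fun ⟨a, b⟩ => ?_) hprod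
  have hab : ((a : ℝ) - b) ^ 2 ≤ (1 + (a : ℝ)) ^ 2 * (1 + (b : ℝ)) ^ 2 := by
    nlinarith [a.cast_nonneg (α := ℝ), b.cast_nonneg (α := ℝ),
      mul_nonneg (a.cast_nonneg (α := ℝ)) (b.cast_nonneg (α := ℝ))]
  simp only [pairTerm, zpow_neg, zpow_natCast]
  calc (1 + (a : ℝ)) * (1 + b) * (a - b) ^ 2 * ((x + a) ^ p)⁻¹ * ((x + b) ^ q)⁻¹
      ≤ (1 + (a : ℝ)) * (1 + b) * ((1 + a) ^ 2 * (1 + b) ^ 2) * ((x + a) ^ p)⁻¹ *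
          ((x + b) ^ q)⁻¹ := by gcongr
    _ = (1 + (a : ℝ)) ^ 3 / (x + a) ^ p * ((1 + (b : ℝ)) ^ 3 / (x + b) ^ q) := by ring

theorem hasDerivAt_pairTerm (p q : ℕ) {x : ℝ} (hx : 0 < x) (ab : ℕ × ℕ) :
    HasDerivAt (fun y => pairTerm p q y ab)
      (-(p * pairTerm (p + 1) q x ab + q * pairTerm p (q + 1) x ab)) x := by
  have hzpow (c m : ℕ) : HasDerivAt (fun y : ℝ => (y + c) ^ (-(m : ℤ)))
      (-m * (x + c) ^ (-((m + 1 : ℕ) : ℤ))) x :=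
    ((hasDerivAt_zpow (-(m : ℤ)) (x + c) (Or.inl (by positivity))).comp_add_const x _).congr_deriv
      (by push_cast; ring_nf)
  have hfun : (fun y => pairTerm p q y ab) = fun y =>
      (1 + (ab.1 : ℝ)) * (1 + (ab.2 : ℝ)) * ((ab.1 : ℝ) - ab.2) ^ 2 *
        ((y + ab.1) ^ (-(p : ℤ)) * (y + ab.2) ^ (-(q : ℤ))) := by
    funext y
    simp only [pairTerm]
    ring
  rw [hfun]
  exact (((hzpow ab.1 p).mul (hzpow ab.2 q)).const_mul _).congr_deriv
    (by simp only [pairTerm]; ring)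

theorem hasDerivAt_pairSum {p q : ℕ} (hp : 5 ≤ p) (hq : 5 ≤ q) {x : ℝ} (hx : 0 < x) :
    HasDerivAt (pairSum p q) (-(p * pairSum (p + 1) q x + q * pairSum p (q + 1) x)) x := by
  have hx2 : 0 < x / 2 := half_pos hx
  have hs₁ (y : ℝ) (hy : 0 < y) := summable_pairTerm (p := p + 1) (by omega) hq hy
  have hs₂ (y : ℝ) (hy : 0 < y) := summable_pairTerm (q := q + 1) hp (by omega) hy
  have hderiv := hasDerivAt_tsum_of_isPreconnected (t := Ioi (x / 2)) (y₀ := x) (y := x)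
    (g := fun ab y => pairTerm p q y ab)
    (((hs₁ _ hx2).mul_left (p : ℝ)).add ((hs₂ _ hx2).mul_left (q : ℝ)))
    isOpen_Ioi isPreconnected_Ioi
    (fun ab y hy => hasDerivAt_pairTerm p q (hx2.trans hy) ab)
    (fun ab y (hy : x / 2 < y) => by
      have hy0 := hx2.trans hy
      rw [norm_neg, Real.norm_of_nonneg (by
        have := pairTerm_nonneg (p + 1) q hy0 ab
        have := pairTerm_nonneg p (q + 1) hy0 ab
        positivity)]
      gcongr <;> exact pairTerm_anti _ _ hx2 hy.le ab)
    (half_lt_self hx) (summable_pairTerm hp hq hx) (half_lt_self hx)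
  rwa [tsum_neg, Summable.tsum_add ((hs₁ _ hx).mul_left _) ((hs₂ _ hx).mul_left _),
    tsum_mul_left, tsum_mul_left] at hderiv

theorem two_mul_weightedHurwitz_mul_sub_sq {p : ℕ} (hp : 3 ≤ p) {x : ℝ} (hx : 0 < x) :
    2 * (weightedHurwitz p x * weightedHurwitz (p + 2) x - weightedHurwitz (p + 1) x ^ 2) =
      pairSum (p + 2) (p + 2) x := by
  rw [weightedHurwitz, weightedHurwitz, weightedHurwitz,
    two_mul_tsum_mul_tsum_sub_sq (summable_one_add_div_add_pow hp hx)
      (summable_one_add_div_add_pow (by omega) hx) (summable_one_add_div_add_pow (by omega) hx)]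
  refine tsum_congr fun ⟨a, b⟩ => ?_
  simp only [pairTerm, zpow_neg, zpow_natCast]
  field_simp
  ring

inductive PairCone : (ℝ → ℝ) → Prop
  | pairSum {p q : ℕ} (hp : 5 ≤ p) (hq : 5 ≤ q) : PairCone (pairSum p q)
  | add {f g : ℝ → ℝ} : PairCone f → PairCone g → PairCone (f + g)
  | smul {c : ℝ} (hc : 0 ≤ c) {f : ℝ → ℝ} : PairCone f → PairCone (c • f)

namespace PairCone

theorem nonneg {f : ℝ → ℝ} (hf : PairCone f) {x : ℝ} (hx : 0 < x) : 0 ≤ f x := by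
  induction hf with
  | pairSum => exact tsum_nonneg (pairTerm_nonneg _ _ hx)
  | add _ _ ih₁ ih₂ => exact add_nonneg ih₁ ih₂
  | smul hc _ ih => exact mul_nonneg hc ih

theorem exists_hasDerivAt {f : ℝ → ℝ} (hf : PairCone f) :
    ∃ g, PairCone g ∧ ∀ x, 0 < x → HasDerivAt f (-g x) x := by
  induction hf with
  | @pairSum p q hp hq =>
    exact ⟨(p : ℝ) • Psi2.pairSum (p + 1) q + (q : ℝ) • Psi2.pairSum p (q + 1),
      .add (.smul p.cast_nonneg (.pairSum (by omega) hq))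
        (.smul q.cast_nonneg (.pairSum hp (by omega))),
      fun x hx => hasDerivAt_pairSum hp hq hx⟩
  | add _ _ ih₁ ih₂ =>
    obtain ⟨g₁, hg₁, hd₁⟩ := ih₁
    obtain ⟨g₂, hg₂, hd₂⟩ := ih₂
    exact ⟨g₁ + g₂, hg₁.add hg₂, fun x hx => ((hd₁ x hx).add (hd₂ x hx)).congr_deriv (by
      simp only [Pi.add_apply]; ring)⟩
  | smul hc _ ih =>
    obtain ⟨g, hg, hd⟩ := ih
    exact ⟨_ • g, hg.smul hc, fun x hx => ((hd x hx).const_smul _).congr_deriv (by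
      simp only [Pi.smul_apply, smul_neg])⟩

end PairCone

end Psi2

open Psi2

theorem stmt_14 (n : ℕ) (hn : 3 ≤ n) :
    ∀ k : ℕ, ∀ x : ℝ, 0 < x →
      0 ≤ (-1) ^ k * iteratedDeriv k
        (fun y => ((n : ℝ) / (n + 1)) * psi2 (n - 1) y * psi2 (n + 1) y - (psi2 n y) ^ 2) x := by
  intro k x hx
  have hF : EqOn (fun y => ((n : ℝ) / (n + 1)) * psi2 (n - 1) y * psi2 (n + 1) y - (psi2 n y) ^ 2)
      (((n.factorial : ℝ) ^ 2 / 2) • pairSum (n + 2) (n + 2)) (Ioi 0) := fun y (hy : 0 < y) => by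
    dsimp only [Pi.smul_apply, smul_eq_mul]
    rw [psi2_mul_psi2_sub_sq (by omega), ← two_mul_weightedHurwitz_mul_sub_sq hn hy]
    ring
  exact neg_one_pow_mul_iteratedDeriv_nonneg isOpen_Ioi (fun f hf => hf.exists_hasDerivAt)
    (fun f hf y hy => hf.nonneg hy) ((PairCone.pairSum (by omega) (by omega)).smul (by positivity))
    hF k hx
end

section
/- For every integer n ≥ 3 and every a > 0, the integral ∫_0^1 [(2n−3)x² − 1] · f(a(1+x)) · f(a(1−x)) dx is negative, where f(t) = t^{n-1}/(1 − e^{-t})². -/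
/-!
Write `ψ t = t / (1 - exp (-t))`, so that `f t = t ^ (n - 3) ψ t ^ 2`, and
`φ x = ψ (a (1 - x)) ψ (a (1 + x))`. The integrand factors as
`a ^ (2n - 6) w(x) φ(x) ^ 2` with `w(x) = ((2n - 3) x ^ 2 - 1) (1 - x ^ 2) ^ (n - 3)`.
The weight `w` has integral zero on `[0, 1]` (it is the derivative of `-x (1 - x ^ 2) ^ (n - 2)`)
and changes sign once, from negative to positive, while `φ` is strictly decreasing because
`log ψ` is strictly concave: `(log ψ)' = 1/t - 1/(e^t - 1)` decreases since `t < 2 sinh (t/2)`.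
Hence the integral is negative.
-/

open Real Set MeasureTheory intervalIntegral

noncomputable def f16 (n : ℕ) (t : ℝ) : ℝ := t ^ (n - 1) / (1 - Real.exp (-t)) ^ 2

theorem integral_mul_neg_of_sign_change {g h : ℝ → ℝ} {a b c : ℝ} (hac : a < c) (hcb : c < b)
    (hg : IntervalIntegrable g volume a b)
    (hgh : IntervalIntegrable (fun x => g x * h x) volume a b)
    (hg_integral : ∫ x in a..b, g x = 0) (hg_neg : ∀ x ∈ Ioo a c, g x < 0)
    (hg_pos : ∀ x ∈ Ioo c b, 0 < g x) (hh : StrictAntiOn h (Ioo a b)) :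
    ∫ x in a..b, g x * h x < 0 := by
  -- since `∫ g = 0`, the integral equals `-∫ g (h c - h)`, whose integrand is positive off `c`
  set k := fun x => g x * (h c - h x)
  have hc : c ∈ Ioo a b := ⟨hac, hcb⟩
  have hk : IntervalIntegrable k volume a b := by
    simpa only [k, mul_sub] using (hg.mul_const (h c)).sub hgh
  have hk_integral : ∫ x in a..b, k x = -∫ x in a..b, g x * h x := by
    simp only [k, mul_sub]
    rw [integral_sub (hg.mul_const _) hgh, intervalIntegral.integral_mul_const, hg_integral,
      zero_mul, zero_sub]
  have hk_left := hk.mono_set (uIcc_subset_uIcc_left (mem_uIcc_of_le hac.le hcb.le))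
  have hk_right := hk.mono_set (uIcc_subset_uIcc_right (mem_uIcc_of_le hac.le hcb.le))
  have h_left : 0 < ∫ x in a..c, k x :=
    intervalIntegral_pos_of_pos_on hk_left (fun x hx => mul_pos_of_neg_of_neg (hg_neg x hx)
      (sub_neg.2 (hh ⟨hx.1, hx.2.trans hcb⟩ hc hx.2))) hac
  have h_right : 0 < ∫ x in c..b, k x :=
    intervalIntegral_pos_of_pos_on hk_right (fun x hx => mul_pos (hg_pos x hx)
      (sub_pos.2 (hh hc ⟨hac.trans hx.1, hx.2⟩ hx.1))) hcb
  have := integral_add_adjacent_intervals hk_left hk_right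
  linarith

lemma one_sub_exp_neg_pos {t : ℝ} (ht : 0 < t) : 0 < 1 - exp (-t) :=
  sub_pos.2 (exp_lt_one_iff.2 (neg_neg_of_pos ht))

lemma exp_sub_one_pos {t : ℝ} (ht : 0 < t) : 0 < exp t - 1 :=
  sub_pos.2 (one_lt_exp_iff.2 ht)

noncomputable def psi (t : ℝ) : ℝ := t / (1 - exp (-t))

lemma f16_eq (m : ℕ) (t : ℝ) : f16 (m + 3) t = t ^ m * psi t ^ 2 := by
  rw [f16, psi, div_pow, Nat.add_sub_assoc (by norm_num), pow_add]
  ring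

lemma psi_pos {t : ℝ} (ht : 0 < t) : 0 < psi t := div_pos ht (one_sub_exp_neg_pos ht)

lemma psi_nonneg {t : ℝ} (ht : 0 ≤ t) : 0 ≤ psi t :=
  div_nonneg ht (sub_nonneg.2 (exp_le_one_iff.2 (neg_nonpos.2 ht)))

noncomputable def logDerivPsi (t : ℝ) : ℝ := t⁻¹ - (exp t - 1)⁻¹

lemma hasDerivAt_psi {t : ℝ} (ht : 0 < t) : HasDerivAt psi (psi t * logDerivPsi t) t := by
  have hE : HasDerivAt (fun s => 1 - exp (-s)) (exp (-t)) t := by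
    simpa using ((hasDerivAt_neg t).exp).const_sub 1
  refine ((hasDerivAt_id' t).div hE (one_sub_exp_neg_pos ht).ne').congr_deriv ?_
  have h₁ := (one_sub_exp_neg_pos ht).ne'
  have h₂ := (exp_sub_one_pos ht).ne'
  rw [psi, logDerivPsi, exp_neg] at *
  field_simp

lemma sq_mul_exp_lt_sq_exp_sub_one {t : ℝ} (ht : 0 < t) : t ^ 2 * exp t < (exp t - 1) ^ 2 := by
  -- `t < 2 sinh (t / 2)`, multiplied by `exp (t / 2)` and squared
  have hsinh : t * exp (t / 2) < exp t - 1 := by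
    have h := mul_lt_mul_of_pos_right (self_lt_sinh_iff.2 (half_pos ht)) (exp_pos (t / 2))
    rw [sinh_eq, div_mul_eq_mul_div, div_mul_eq_mul_div, sub_mul, ← exp_add, ← exp_add] at h
    norm_num at h
    linarith
  have h := pow_lt_pow_left₀ hsinh (by positivity) two_ne_zero
  rwa [mul_pow, ← exp_nat_mul, Nat.cast_ofNat, mul_div_cancel₀ t two_ne_zero] at h

lemma hasDerivAt_logDerivPsi {t : ℝ} (ht : 0 < t) :
    HasDerivAt logDerivPsi (-(t ^ 2)⁻¹ + exp t / (exp t - 1) ^ 2) t := by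
  refine ((hasDerivAt_inv ht.ne').sub
    (((hasDerivAt_exp t).sub_const 1).inv (exp_sub_one_pos ht).ne')).congr_deriv ?_
  ring

lemma logDerivPsi_strictAntiOn : StrictAntiOn logDerivPsi (Ioi 0) := by
  refine strictAntiOn_of_hasDerivWithinAt_neg (convex_Ioi 0)
    (f' := fun t => -(t ^ 2)⁻¹ + exp t / (exp t - 1) ^ 2)
    (fun t ht => (hasDerivAt_logDerivPsi ht).continuousAt.continuousWithinAt)
    (fun t ht => ?_) (fun t ht => ?_)
  · rw [interior_Ioi] at ht
    exact (hasDerivAt_logDerivPsi ht).hasDerivWithinAt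
  · rw [interior_Ioi, mem_Ioi] at ht
    have h₁ := exp_sub_one_pos ht
    rw [neg_add_lt_iff_lt_add, add_zero, div_lt_iff₀ (by positivity), inv_mul_eq_div,
      lt_div_iff₀ (by positivity)]
    linarith [sq_mul_exp_lt_sq_exp_sub_one ht]

noncomputable def phi (a x : ℝ) : ℝ := psi (a * (1 - x)) * psi (a * (1 + x))

lemma phi_pos {a x : ℝ} (ha : 0 < a) (hx : x ∈ Ioo (-1) 1) : 0 < phi a x :=
  mul_pos (psi_pos (by nlinarith [hx.2])) (psi_pos (by nlinarith [hx.1]))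

lemma phi_nonneg {a x : ℝ} (ha : 0 < a) (hx : x ∈ Icc (-1) 1) : 0 ≤ phi a x :=
  mul_nonneg (psi_nonneg (by nlinarith [hx.2])) (psi_nonneg (by nlinarith [hx.1]))

lemma phi_one (a : ℝ) : phi a 1 = 0 := by simp [phi, psi]

lemma hasDerivAt_phi {a x : ℝ} (ha : 0 < a) (hx : x ∈ Ioo (-1) 1) :
    HasDerivAt (phi a)
      (a * phi a x * (logDerivPsi (a * (1 + x)) - logDerivPsi (a * (1 - x)))) x := by
  have hu : HasDerivAt (fun y => a * (1 - y)) (-a) x := by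
    simpa using ((hasDerivAt_id' x).const_sub 1).const_mul a
  have hv : HasDerivAt (fun y => a * (1 + y)) a x := by
    simpa using ((hasDerivAt_id' x).const_add 1).const_mul a
  have h₁ := (hasDerivAt_psi (by nlinarith [hx.2] : 0 < a * (1 - x))).comp x hu
  have h₂ := (hasDerivAt_psi (by nlinarith [hx.1] : 0 < a * (1 + x))).comp x hv
  refine (h₁.mul h₂).congr_deriv ?_
  simp only [phi, Function.comp_apply]
  ring

lemma phi_strictAntiOn {a : ℝ} (ha : 0 < a) : StrictAntiOn (phi a) (Icc 0 1) := by
  have hIco : StrictAntiOn (phi a) (Ico 0 1) := by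
    refine strictAntiOn_of_hasDerivWithinAt_neg (convex_Ico 0 1) (f' := fun x =>
      a * phi a x * (logDerivPsi (a * (1 + x)) - logDerivPsi (a * (1 - x))))
      (fun x hx => (hasDerivAt_phi ha ⟨by linarith [hx.1], hx.2⟩).continuousAt.continuousWithinAt)
      (fun x hx => ?_) (fun x hx => ?_)
    · rw [interior_Ico] at hx
      exact (hasDerivAt_phi ha ⟨by linarith [hx.1], hx.2⟩).hasDerivWithinAt
    · rw [interior_Ico] at hx
      have hpos := phi_pos ha ⟨by linarith [hx.1], hx.2⟩
      have hL : logDerivPsi (a * (1 + x)) < logDerivPsi (a * (1 - x)) :=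
        logDerivPsi_strictAntiOn (mem_Ioi.2 (by nlinarith [hx.2])) (mem_Ioi.2 (by nlinarith [hx.1]))
          (by nlinarith [hx.1])
      exact mul_neg_of_pos_of_neg (mul_pos ha hpos) (sub_neg.2 hL)
  intro x hx y hy hxy
  rcases hy.2.lt_or_eq with hy1 | rfl
  · exact hIco ⟨hx.1, hxy.trans hy1⟩ ⟨hy.1, hy1⟩ hxy
  · rw [phi_one]
    exact phi_pos ha ⟨by linarith [hx.1], hxy⟩

lemma sq_phi_strictAntiOn {a : ℝ} (ha : 0 < a) :
    StrictAntiOn (fun x => phi a x ^ 2) (Icc 0 1) := fun x hx y hy hxy =>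
  pow_lt_pow_left₀ (phi_strictAntiOn ha hx hy hxy)
    (phi_nonneg ha ⟨by linarith [hy.1], hy.2⟩) two_ne_zero

noncomputable def weight (m : ℕ) (x : ℝ) : ℝ := ((2 * m + 3) * x ^ 2 - 1) * (1 - x ^ 2) ^ m

lemma continuous_weight (m : ℕ) : Continuous (weight m) := by unfold weight; fun_prop

lemma hasDerivAt_weight_antideriv (m : ℕ) (x : ℝ) :
    HasDerivAt (fun y => -(y * (1 - y ^ 2) ^ (m + 1))) (weight m x) x := by
  have h := (hasDerivAt_id' x).fun_mul (((hasDerivAt_pow 2 x).const_sub 1).fun_pow (m + 1))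
  refine h.neg.congr_deriv ?_
  rw [weight, Nat.add_sub_cancel, pow_succ]
  push_cast
  ring

lemma integral_weight (m : ℕ) : ∫ x in (0 : ℝ)..1, weight m x = 0 := by
  rw [integral_eq_sub_of_hasDerivAt (fun x _ => hasDerivAt_weight_antideriv m x)
    ((continuous_weight m).intervalIntegrable 0 1)]
  simp

lemma weight_neg {m : ℕ} {x : ℝ} (hx : x ∈ Ioo 0 √((2 * m + 3)⁻¹)) : weight m x < 0 := by
  have hm : (0 : ℝ) < 2 * m + 3 := by positivity
  have hx2 : (2 * m + 3) * x ^ 2 < 1 := by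
    simpa [hm.ne'] using mul_lt_mul_of_pos_left ((lt_sqrt hx.1.le).1 hx.2) hm
  have hx1 : x ^ 2 < 1 := by nlinarith
  exact mul_neg_of_neg_of_pos (by linarith) (pow_pos (by linarith) m)

lemma weight_pos {m : ℕ} {x : ℝ} (hx : x ∈ Ioo √((2 * m + 3)⁻¹) 1) : 0 < weight m x := by
  have hm : (0 : ℝ) < 2 * m + 3 := by positivity
  have hx0 : 0 < x := (sqrt_nonneg _).trans_lt hx.1
  have hx2 : 1 < (2 * m + 3) * x ^ 2 := by
    simpa [hm.ne'] using mul_lt_mul_of_pos_left ((sqrt_lt' hx0).1 hx.1) hm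
  have hx1 : x ^ 2 < 1 := by nlinarith [hx.2]
  exact mul_pos (by linarith) (pow_pos (by linarith) m)
lemma integrand_eq_weight_mul_sq_phi (m : ℕ) (a x : ℝ) :
    ((2 * ((m + 3 : ℕ) : ℝ) - 3) * x ^ 2 - 1) * f16 (m + 3) (a * (1 + x)) *
      f16 (m + 3) (a * (1 - x)) = (a ^ 2) ^ m * (weight m x * phi a x ^ 2) := by
  have hpow : (a * (1 + x)) ^ m * (a * (1 - x)) ^ m = (a ^ 2) ^ m * (1 - x ^ 2) ^ m := by
    rw [← mul_pow, ← mul_pow]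
    ring
  rw [f16_eq, f16_eq, weight, phi]
  push_cast
  linear_combination
    ((2 * m + 3) * x ^ 2 - 1) * psi (a * (1 + x)) ^ 2 * psi (a * (1 - x)) ^ 2 * hpow

lemma intervalIntegrable_weight_mul_sq_phi (m : ℕ) {a : ℝ} (ha : 0 < a) :
    IntervalIntegrable (fun x => weight m x * phi a x ^ 2) volume 0 1 := by
  refine IntervalIntegrable.continuousOn_mul ?_ (continuous_weight m).continuousOn
  exact AntitoneOn.intervalIntegrable
    (by simpa only [uIcc_of_le zero_le_one] using (sq_phi_strictAntiOn ha).antitoneOn)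

theorem stmt_16 (n : ℕ) (hn : 3 ≤ n) (a : ℝ) (ha : 0 < a) :
    (∫ x in (0 : ℝ)..1,
      ((2 * (n : ℝ) - 3) * x ^ 2 - 1) * f16 n (a * (1 + x)) * f16 n (a * (1 - x))) < 0 := by
  obtain ⟨m, rfl⟩ : ∃ m, n = m + 3 := ⟨n - 3, by omega⟩
  have hc : √((2 * m + 3)⁻¹) < 1 := by
    rw [sqrt_lt' one_pos, one_pow]
    exact inv_lt_one_of_one_lt₀ (by linarith [(m.cast_nonneg : (0 : ℝ) ≤ m)])
  simp_rw [integrand_eq_weight_mul_sq_phi, intervalIntegral.integral_const_mul]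
  refine mul_neg_of_pos_of_neg (by positivity) (integral_mul_neg_of_sign_change
    (sqrt_pos.2 (by positivity)) hc ((continuous_weight m).intervalIntegrable 0 1)
    (intervalIntegrable_weight_mul_sq_phi m ha) (integral_weight m) (fun x => weight_neg)
    (fun x => weight_pos) ((sq_phi_strictAntiOn ha).mono Ioo_subset_Icc_self))
end

section
/- Let n ≥ 2 be an integer and let g(x) = (-1)^{n+1} ψ₂⁽ⁿ⁾(x), which is completely monotonic on (0,∞). Fix m > 0 and an odd integer r ≥ 1. Then for all x₁, x₂ ∈ (0,m) with x₁ + x₂ ≤ m, g^{(r)}(x₁) + g^{(r)}(x₂) ≤ g^{(r)}(x₁ + x₂). -/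
/-! Up to the sign, `g = n! · Σₖ (1 + k)/(x + k)^(n+1)`, and termwise differentiation gives
`g^(r) = (-1)^r (n+1)(n+2)⋯(n+r) · n! · Σₖ (1 + k)/(x + k)^(n+1+r)`. For odd `r` this is
nonpositive and increasing on `(0, ∞)`, so
`g^(r)(x₁) + g^(r)(x₂) ≤ g^(r)(x₁) ≤ g^(r)(x₁ + x₂)`. -/

open Set Nat

noncomputable def weightedHurwitz (p : ℕ) (x : ℝ) : ℝ :=
  ∑' k : ℕ, (1 + (k : ℝ)) / (x + k) ^ p

lemma summable_weightedHurwitz {p : ℕ} (hp : 3 ≤ p) {x : ℝ} (hx : 0 < x) :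
    Summable fun k : ℕ => (1 + (k : ℝ)) / (x + k) ^ p := by
  obtain ⟨q, rfl⟩ : ∃ q, p = q + 1 := ⟨p - 1, by omega⟩
  set c := min x 1
  have hc : 0 < c := lt_min hx one_pos
  have hbound : Summable fun k : ℕ => (c ^ (q + 1))⁻¹ * (1 / ((k + 1 : ℕ) : ℝ) ^ q) :=
    ((summable_nat_add_iff 1).2 (Real.summable_one_div_nat_pow.2 (by omega))).mul_left _
  refine hbound.of_nonneg_of_le (fun k => by positivity) fun k => ?_
  have hck : c * (1 + k) ≤ x + k := by
    nlinarith [min_le_left x 1, min_le_right x 1, k.cast_nonneg (α := ℝ)]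
  calc (1 + (k : ℝ)) / (x + k) ^ (q + 1) ≤ (1 + k) / (c * (1 + k)) ^ (q + 1) := by gcongr
    _ = (c ^ (q + 1))⁻¹ * (1 / ((k + 1 : ℕ) : ℝ) ^ q) := by
      rw [mul_pow]
      push_cast
      field_simp
      ring

lemma hasDerivAt_div_add_pow (a b : ℝ) (p : ℕ) {y : ℝ} (hy : y + b ≠ 0) :
    HasDerivAt (fun z => a / (z + b) ^ p) (-(p * (a / (y + b) ^ (p + 1)))) y := by
  have hpow : HasDerivAt (fun z => (z + b) ^ p) (p * (y + b) ^ (p - 1)) y := by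
    simpa using (hasDerivAt_pow p (y + b)).comp_add_const y b
  refine ((hasDerivAt_const y a).fun_div hpow (pow_ne_zero p hy)).congr_deriv ?_
  rcases p with _ | p
  · simp
  · rw [Nat.add_sub_cancel]
    field_simp
    ring

lemma hasDerivAt_weightedHurwitz {p : ℕ} (hp : 3 ≤ p) {x : ℝ} (hx : 0 < x) :
    HasDerivAt (weightedHurwitz p) (-(p * weightedHurwitz (p + 1) x)) x := by
  have hpos : ∀ k : ℕ, ∀ y ∈ Ioi (x / 2), 0 < y + k := fun k y hy => by
    have : 0 < y := (half_pos hx).trans hy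
    positivity
  have hx₀ : x ∈ Ioi (x / 2) := half_lt_self hx
  have h := hasDerivAt_tsum_of_isPreconnected
    (u := fun k : ℕ => p * ((1 + (k : ℝ)) / (x / 2 + k) ^ (p + 1)))
    ((summable_weightedHurwitz (by omega) (half_pos hx)).mul_left _) isOpen_Ioi isPreconnected_Ioi
    (fun k y hy => hasDerivAt_div_add_pow (1 + (k : ℝ)) k p (hpos k y hy).ne')
    (fun k y hy => by
      have hy' : x / 2 + k ≤ y + k := by linarith [mem_Ioi.1 hy]
      have := hpos k y hy
      rw [norm_neg, Real.norm_of_nonneg (by positivity)]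
      gcongr)
    hx₀ (summable_weightedHurwitz hp hx) hx₀
  rwa [tsum_neg, tsum_mul_left] at h

lemma iteratedDeriv_weightedHurwitz {p : ℕ} (hp : 3 ≤ p) (j : ℕ) {x : ℝ} (hx : 0 < x) :
    iteratedDeriv j (weightedHurwitz p) x
      = (-1) ^ j * p.ascFactorial j * weightedHurwitz (p + j) x := by
  induction j generalizing x with
  | zero => simp
  | succ j ih =>
    have hev : iteratedDeriv j (weightedHurwitz p)
        =ᶠ[nhds x] fun y => (-1) ^ j * p.ascFactorial j * weightedHurwitz (p + j) y :=
      Filter.eventually_of_mem (Ioi_mem_nhds hx) fun y hy => ih hy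
    rw [iteratedDeriv_succ, hev.deriv_eq,
      ((hasDerivAt_weightedHurwitz (by omega) hx).const_mul _).deriv, ascFactorial_succ,
      ← add_assoc]
    push_cast
    ring

lemma weightedHurwitz_nonneg (p : ℕ) {x : ℝ} (hx : 0 ≤ x) : 0 ≤ weightedHurwitz p x :=
  tsum_nonneg fun k => by positivity

lemma antitoneOn_weightedHurwitz {p : ℕ} (hp : 3 ≤ p) : AntitoneOn (weightedHurwitz p) (Ioi 0) :=
  fun x hx y hy hxy =>
    (summable_weightedHurwitz hp hy).tsum_le_tsum (fun k => by have := mem_Ioi.1 hx; gcongr)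
      (summable_weightedHurwitz hp hx)

lemma neg_one_pow_mul_psi2 (n : ℕ) :
    (fun y => (-1) ^ (n + 1) * psi2 n y) = fun y => (n ! : ℝ) * weightedHurwitz (n + 1) y := by
  ext y
  rw [psi2, weightedHurwitz, ← mul_assoc, ← mul_assoc, ← pow_add, Even.neg_one_pow ⟨_, rfl⟩,
    one_mul]

theorem stmt_18_general (n : ℕ) (hn : 2 ≤ n) (m : ℝ) (r : ℕ) (hr : Odd r)
    (x₁ x₂ : ℝ) (hx₁ : x₁ ∈ Set.Ioo 0 m) (hx₂ : x₂ ∈ Set.Ioo 0 m) :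
    iteratedDeriv r (fun y => (-1) ^ (n + 1) * psi2 n y) x₁ +
      iteratedDeriv r (fun y => (-1) ^ (n + 1) * psi2 n y) x₂ ≤
      iteratedDeriv r (fun y => (-1) ^ (n + 1) * psi2 n y) (x₁ + x₂) := by
  have hp : 3 ≤ n + 1 := by omega
  have h₁ : 0 < x₁ := hx₁.1
  have h₂ : 0 < x₂ := hx₂.1
  have h₁₂ : 0 < x₁ + x₂ := add_pos h₁ h₂
  rw [neg_one_pow_mul_psi2]
  simp only [iteratedDeriv_const_mul_field, iteratedDeriv_weightedHurwitz hp r h₁,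
    iteratedDeriv_weightedHurwitz hp r h₂, iteratedDeriv_weightedHurwitz hp r h₁₂, hr.neg_one_pow]
  have hc : 0 < (n ! : ℝ) * (n + 1).ascFactorial r := by positivity
  have hanti : weightedHurwitz (n + 1 + r) (x₁ + x₂) ≤ weightedHurwitz (n + 1 + r) x₁ :=
    antitoneOn_weightedHurwitz (by omega) h₁ h₁₂ (by linarith)
  have hnonneg := weightedHurwitz_nonneg (n + 1 + r) h₂.le
  nlinarith

theorem stmt_18 (n : ℕ) (hn : 2 ≤ n) (m : ℝ) (hm : 0 < m) (r : ℕ) (hr : Odd r)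
    (x₁ x₂ : ℝ) (hx₁ : x₁ ∈ Set.Ioo 0 m) (hx₂ : x₂ ∈ Set.Ioo 0 m) (hsum : x₁ + x₂ ≤ m) :
    iteratedDeriv r (fun y => (-1) ^ (n + 1) * psi2 n y) x₁ +
      iteratedDeriv r (fun y => (-1) ^ (n + 1) * psi2 n y) x₂ ≤
      iteratedDeriv r (fun y => (-1) ^ (n + 1) * psi2 n y) (x₁ + x₂) :=
  stmt_18_general n hn m r hr x₁ x₂ hx₁ hx₂
end
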